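/- Let M be a nonsingular right R-module. If (R ⊕ M) is a SIP-CS right R-module, then every cyclic submodule of M is projective. -/

import Mathlib

universe u v w

section Defs

variable {S : Type u} [Ring S]

/-- A submodule `A` is a direct summand of `M`. -/
def IsDirectSummand {M : Type v} [AddCommGroup M] [Module S M] (A : Submodule S M) : Prop :=
  ∃ B : Submodule S M, A ⊓ B = ⊥ ∧ A ⊔ B = ⊤

/-- `A` is an essential submodule of `B`. -/
def IsEssentialIn {M : Type v} [AddCommGroup M] [Module S M] (A B : Submodule S M) : Prop :=
  A ≤ B ∧ ∀ K : Submodule S M, K ≤ B → K ≠ ⊥ → A ⊓ K ≠ ⊥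

/-- `A` is essential in some direct summand of `M`. -/
def EssentialInSummand {M : Type v} [AddCommGroup M] [Module S M] (A : Submodule S M) : Prop :=
  ∃ D : Submodule S M, IsDirectSummand D ∧ IsEssentialIn A D

/-- `A` is a small (superfluous) submodule of `M`. -/
def IsSmallSubmodule {M : Type v} [AddCommGroup M] [Module S M] (A : Submodule S M) : Prop :=
  ∀ K : Submodule S M, A ⊔ K = ⊤ → K = ⊤

/-- `A` lies above the direct summand `D` of `M`, i.e. `D ≤ A` and `A/D` is small in `M/D`. -/
def LiesAbove {M : Type v} [AddCommGroup M] [Module S M] (A D : Submodule S M) : Prop :=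
  IsDirectSummand D ∧ D ≤ A ∧ IsSmallSubmodule (Submodule.map D.mkQ A)

/-- `A` lies above some direct summand of `M`. -/
def LiesAboveSummand {M : Type v} [AddCommGroup M] [Module S M] (A : Submodule S M) : Prop :=
  ∃ D : Submodule S M, LiesAbove A D

end Defs

section ModDefs

variable (S : Type u) [Ring S]

/-- SSP: the sum of any two direct summands is a direct summand. -/
def HasSSP (M : Type v) [AddCommGroup M] [Module S M] : Prop :=
  ∀ A B : Submodule S M, IsDirectSummand A → IsDirectSummand B → IsDirectSummand (A ⊔ B)

/-- SIP: the intersection of any two direct summands is a direct summand. -/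
def HasSIP (M : Type v) [AddCommGroup M] [Module S M] : Prop :=
  ∀ A B : Submodule S M, IsDirectSummand A → IsDirectSummand B → IsDirectSummand (A ⊓ B)

/-- SIP-CS: the intersection of any finite family of direct summands is essential in a
direct summand. -/
def IsSIPCS (M : Type v) [AddCommGroup M] [Module S M] : Prop :=
  ∀ (ι : Type) [Fintype ι] (A : ι → Submodule S M),
    (∀ i, IsDirectSummand (A i)) → EssentialInSummand (⨅ i, A i)

/-- SSP-lifting: if each member of a finite family of submodules lies above a direct summand,
then their sum lies above a direct summand. -/
def IsSSPLifting (M : Type v) [AddCommGroup M] [Module S M] : Prop :=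
  ∀ (ι : Type) [Fintype ι] (A : ι → Submodule S M),
    (∀ i, LiesAboveSummand (A i)) → LiesAboveSummand (⨆ i, A i)

/-- C2 condition: every submodule isomorphic to a direct summand is a direct summand. -/
def HasC2 (M : Type v) [AddCommGroup M] [Module S M] : Prop :=
  ∀ A B : Submodule S M, IsDirectSummand B → Nonempty (A ≃ₗ[S] B) → IsDirectSummand A

/-- C3 condition: the sum of two direct summands with zero intersection is a direct summand. -/
def HasC3 (M : Type v) [AddCommGroup M] [Module S M] : Prop :=
  ∀ A B : Submodule S M, IsDirectSummand A → IsDirectSummand B → A ⊓ B = ⊥ →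
    IsDirectSummand (A ⊔ B)

/-- D2 condition: if `M/A` is isomorphic to a direct summand of `M` then `A` is a direct
summand. -/
def HasD2 (M : Type v) [AddCommGroup M] [Module S M] : Prop :=
  ∀ A : Submodule S M, (∃ B : Submodule S M, IsDirectSummand B ∧
    Nonempty ((M ⧸ A) ≃ₗ[S] B)) → IsDirectSummand A

/-- D3 condition: if two direct summands sum to `M`, their intersection is a direct summand. -/
def IsD3Module (M : Type v) [AddCommGroup M] [Module S M] : Prop :=
  ∀ A B : Submodule S M, IsDirectSummand A → IsDirectSummand B → A ⊔ B = ⊤ →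
    IsDirectSummand (A ⊓ B)

/-- `M` is relatively CS-Rickart to `N`. -/
def RelCSRickart (M : Type v) (N : Type w) [AddCommGroup M] [Module S M]
    [AddCommGroup N] [Module S N] : Prop :=
  ∀ φ : M →ₗ[S] N, EssentialInSummand (LinearMap.ker φ)

/-- `M` is relatively d-CS-Rickart to `N`. -/
def RelDCSRickart (M : Type v) (N : Type w) [AddCommGroup M] [Module S M]
    [AddCommGroup N] [Module S N] : Prop :=
  ∀ φ : N →ₗ[S] M, LiesAboveSummand (LinearMap.range φ)

/-- CS-Rickart module. -/
def IsCSRickart (M : Type v) [AddCommGroup M] [Module S M] : Prop :=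
  RelCSRickart S M M

/-- d-CS-Rickart module. -/
def IsDCSRickart (M : Type v) [AddCommGroup M] [Module S M] : Prop :=
  RelDCSRickart S M M

/-- `M` has an `Ω`-cover, where `Ω` is the class of modules satisfying `P`. -/
def HasCover (P : ModuleCat.{v} S → Prop) (M : Type v) [AddCommGroup M] [Module S M] : Prop :=
  ∃ (E : ModuleCat.{v} S) (g : E →ₗ[S] M), P E ∧
    (∀ (E' : ModuleCat.{v} S), P E' → ∀ g' : E' →ₗ[S] M,
      ∃ h : E' →ₗ[S] E, g ∘ₗ h = g') ∧
    (∀ h : E →ₗ[S] E, g ∘ₗ h = g → Function.Bijective h)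

/-- `M` has an `Ω`-envelope, where `Ω` is the class of modules satisfying `P`. -/
def HasEnvelope (P : ModuleCat.{v} S → Prop) (M : Type v) [AddCommGroup M] [Module S M] : Prop :=
  ∃ (E : ModuleCat.{v} S) (g : M →ₗ[S] E), P E ∧
    (∀ (E' : ModuleCat.{v} S), P E' → ∀ g' : M →ₗ[S] E',
      ∃ h : E →ₗ[S] E', h ∘ₗ g = g') ∧
    (∀ h : E →ₗ[S] E, h ∘ₗ g = g → Function.Bijective h)

/-- `M` is 2-generated. -/
def TwoGenerated (M : Type v) [AddCommGroup M] [Module S M] : Prop :=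
  ∃ a b : M, Submodule.span S ({a, b} : Set M) = ⊤

/-- `M` is finitely cogenerated. -/
def FinitelyCogenerated (M : Type v) [AddCommGroup M] [Module S M] : Prop :=
  ∀ 𝒜 : Set (Submodule S M), sInf 𝒜 = ⊥ →
    ∃ ℬ ⊆ 𝒜, ℬ.Finite ∧ sInf ℬ = ⊥

/-- The socle of `M`: the sum of all simple submodules. -/
def SocleOf (M : Type v) [AddCommGroup M] [Module S M] : Submodule S M :=
  sSup {A : Submodule S M | IsSimpleModule S ↥A}

/-- An indecomposable module: nonzero, and its only direct summands are `0` and itself. -/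
def IsIndecomposable (M : Type v) [AddCommGroup M] [Module S M] : Prop :=
  (⊤ : Submodule S M) ≠ ⊥ ∧
    ∀ A : Submodule S M, IsDirectSummand A → A = ⊥ ∨ A = ⊤

end ModDefs

section RingDefs

variable (R : Type u) [Ring R]

/-- The right annihilator of an element of a right `R`-module, as a right ideal of `R`. -/
def rightAnnihilator {M : Type v} [AddCommGroup M] [Module Rᵐᵒᵖ M] (m : M) :
    Submodule Rᵐᵒᵖ R where
  carrier := {r : R | MulOpposite.op r • m = 0}
  add_mem' := by
    intro a b ha hb
    simp only [Set.mem_setOf_eq] at *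
    rw [MulOpposite.op_add, add_smul, ha, hb, add_zero]
  zero_mem' := by simp
  smul_mem' := by
    intro c x hx
    simp only [Set.mem_setOf_eq] at *
    have : MulOpposite.op (c • x) = c * MulOpposite.op x := by
      rw [MulOpposite.smul_eq_mul_unop]
      simp [MulOpposite.op_mul]
    rw [this, mul_smul, hx, smul_zero]

/-- `M` is a nonsingular right `R`-module. -/
def IsNonsingular (M : Type v) [AddCommGroup M] [Module Rᵐᵒᵖ M] : Prop :=
  ∀ m : M, IsEssentialIn (rightAnnihilator R m) (⊤ : Submodule Rᵐᵒᵖ R) → m = 0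

/-- `R` is a right V-ring: every simple right `R`-module is injective. -/
def IsRightVRing : Prop :=
  ∀ (N : Type u) [AddCommGroup N] [Module Rᵐᵒᵖ N],
    IsSimpleModule Rᵐᵒᵖ N → Module.Injective Rᵐᵒᵖ N

/-- `R` is semiregular: `R/J(R)` is von Neumann regular and idempotents lift modulo `J(R)`. -/
def IsSemiregularRing : Prop :=
  (∀ a : R, ∃ b : R, a - a * b * a ∈ Ideal.jacobson (⊥ : Ideal R) ∧ b = b * a * b) ∧
  (∀ a : R, a * a - a ∈ Ideal.jacobson (⊥ : Ideal R) →
    ∃ e : R, e * e = e ∧ e - a ∈ Ideal.jacobson (⊥ : Ideal R))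

end RingDefs

/-!
Let `φ : R → M`, `r ↦ m r`. The graph of `φ` and `R × 0` are direct summands of `R × M` with
intersection `ker φ × 0`, so by SIP-CS this intersection is essential in a direct summand `D`.
Since `M` is nonsingular, the kernel of a map into `M` has no proper essential extension; applied
to `(x, n) ↦ φ x` and `(x, n) ↦ n` this gives `D = ker φ × 0`. Hence `ker φ` is a direct summand
of `R`, and `mR ≅ R / ker φ` is isomorphic to a direct summand of `R`.
-/

open Submodule LinearMap MulOpposite

section Summands

variable {S : Type*} [Ring S] {N P : Type*} [AddCommGroup N] [Module S N]
  [AddCommGroup P] [Module S P]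

theorem isDirectSummand_iff_exists_isCompl {A : Submodule S N} :
    IsDirectSummand A ↔ ∃ B, IsCompl A B := by
  simp only [IsDirectSummand, isCompl_iff, disjoint_iff, codisjoint_iff]

theorem IsSIPCS.essentialInSummand_inf (h : IsSIPCS S N) {A B : Submodule S N}
    (hA : IsDirectSummand A) (hB : IsDirectSummand B) : EssentialInSummand (A ⊓ B) := by
  simpa [iInf_bool_eq] using h Bool (fun b => if b then A else B) (by simp [hA, hB])

theorem isDirectSummand_graph (φ : N →ₗ[S] P) : IsDirectSummand (graph φ) := by
  refine isDirectSummand_iff_exists_isCompl.2 ⟨range (inr S N P), ?_, ?_⟩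
  · rw [disjoint_iff, eq_bot_iff]
    rintro ⟨x, n⟩ ⟨hG, y, hy⟩
    simp only [inr_apply, Prod.mk.injEq] at hy
    obtain ⟨rfl, rfl⟩ := hy
    simpa [mem_graph_iff] using hG
  · rw [codisjoint_iff, eq_top_iff]
    rintro ⟨x, n⟩ -
    have hsum : ((x, n) : N × P) = (x, φ x) + (0, n - φ x) := by simp
    rw [hsum]
    exact add_mem_sup ((mem_graph_iff φ _).2 rfl) ⟨n - φ x, rfl⟩

theorem IsDirectSummand.of_prod_bot {A : Submodule S N}
    (h : IsDirectSummand (A.prod (⊥ : Submodule S P))) : IsDirectSummand A := by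
  obtain ⟨C, hAC⟩ := isDirectSummand_iff_exists_isCompl.1 h
  refine isDirectSummand_iff_exists_isCompl.2 ⟨C.comap (inl S N P), ?_, ?_⟩
  · rw [disjoint_iff, eq_bot_iff]
    intro x ⟨hxA, hxC⟩
    have : ((x, 0) : N × P) ∈ A.prod ⊥ ⊓ C := ⟨mem_prod.2 ⟨hxA, zero_mem _⟩, hxC⟩
    rw [hAC.inf_eq_bot] at this
    simpa using this
  · rw [codisjoint_iff, eq_top_iff]
    rintro x -
    obtain ⟨⟨a, p⟩, ha, c, hc, hac⟩ := mem_sup.1 (hAC.sup_eq_top ▸ mem_top : ((x, 0) : N × P) ∈ _)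
    obtain ⟨haA, rfl : p = 0⟩ := mem_prod.1 ha
    have hc' : inl S N P (x - a) = c := by
      rw [eq_sub_of_add_eq' hac]
      simp
    rw [show x = a + (x - a) by abel]
    exact add_mem_sup haA (show inl S N P (x - a) ∈ C from hc' ▸ hc)

theorem IsDirectSummand.projective_quotient [Module.Projective S N] {A : Submodule S N}
    (h : IsDirectSummand A) : Module.Projective S (N ⧸ A) := by
  obtain ⟨B, hAB⟩ := isDirectSummand_iff_exists_isCompl.1 h
  have : Module.Projective S B :=
    .of_split B.subtype (B.projectionOnto A hAB.symm) (projectionOnto_comp_subtype hAB.symm)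
  exact .of_equiv (quotientEquivOfIsCompl A B hAB).symm

end Summands

section Essential

variable {S : Type*} [Ring S] {N N' : Type*} [AddCommGroup N] [Module S N]
  [AddCommGroup N'] [Module S N'] {A A' D : Submodule S N}

theorem IsEssentialIn.mono_left (h : IsEssentialIn A D) (hA : A ≤ A') (hA' : A' ≤ D) :
    IsEssentialIn A' D :=
  ⟨hA', fun K hK hK0 hbot => h.2 K hK hK0 (eq_bot_iff.2 (hbot ▸ inf_le_inf_right K hA))⟩

theorem IsEssentialIn.comap_top (h : IsEssentialIn A D) (ψ : N' →ₗ[S] N) (hψ : range ψ ≤ D) :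
    IsEssentialIn (A.comap ψ) ⊤ := by
  refine ⟨le_top, fun K _ hK0 hbot => ?_⟩
  have hker : K ⊓ ker ψ = ⊥ :=
    eq_bot_iff.2 (hbot ▸ inf_comm K _ ▸ inf_le_inf_left K (ker_le_comap ψ))
  have hmap : K.map ψ ≠ ⊥ := by
    rw [Ne, ← le_ker_iff_map]
    exact fun hK => hK0 (inf_eq_left.2 hK ▸ hker)
  refine h.2 _ ((map_le_range).trans hψ) hmap (eq_bot_iff.2 ?_)
  rintro _ ⟨hA, k, hk, rfl⟩
  have : k ∈ A.comap ψ ⊓ K := ⟨hA, hk⟩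
  rw [hbot, mem_bot] at this
  simp [this]

end Essential

section Nonsingular

variable {R : Type*} [Ring R] {N P : Type*} [AddCommGroup N] [Module Rᵐᵒᵖ N]
  [AddCommGroup P] [Module Rᵐᵒᵖ P]

variable (R) in
def opToSpanSingleton (d : N) : R →ₗ[Rᵐᵒᵖ] N :=
  (toSpanSingleton Rᵐᵒᵖ N d).comp (opLinearEquiv Rᵐᵒᵖ).toLinearMap

@[simp]
theorem opToSpanSingleton_apply (d : N) (r : R) : opToSpanSingleton R d r = op r • d := rfl

theorem range_opToSpanSingleton (d : N) : range (opToSpanSingleton R d) = span Rᵐᵒᵖ {d} := by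
  rw [opToSpanSingleton, LinearEquiv.range_comp, LinearMap.span_singleton_eq_range]

theorem rightAnnihilator_eq_ker (d : N) : rightAnnihilator R d = ker (opToSpanSingleton R d) :=
  rfl

/-- Pulling the essential extension back along `r ↦ d r` gives an essential right ideal
annihilating `f d`. -/
theorem IsEssentialIn.le_ker_of_isNonsingular (hP : IsNonsingular R P) (f : N →ₗ[Rᵐᵒᵖ] P)
    {A D : Submodule Rᵐᵒᵖ N} (hAD : IsEssentialIn A D) (hA : A ≤ ker f) : D ≤ ker f := by
  intro d hd
  have hψ : range (opToSpanSingleton R d) ≤ D := by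
    rw [range_opToSpanSingleton, span_le, Set.singleton_subset_iff]
    exact hd
  refine hP (f d) ((hAD.comap_top _ hψ).mono_left ?_ le_top)
  intro r hr
  rw [rightAnnihilator_eq_ker, mem_ker, opToSpanSingleton_apply, ← map_smul]
  exact hA hr

end Nonsingular

theorem isDirectSummand_ker_of_isSIPCS_prod {R : Type*} [Ring R] {N M : Type*}
    [AddCommGroup N] [Module Rᵐᵒᵖ N] [AddCommGroup M] [Module Rᵐᵒᵖ M]
    (hM : IsNonsingular R M) (h : IsSIPCS Rᵐᵒᵖ (N × M)) (φ : N →ₗ[Rᵐᵒᵖ] M) :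
    IsDirectSummand (ker φ) := by
  have hGT : graph φ ⊓ range (inl Rᵐᵒᵖ N M) = (ker φ).prod ⊥ := by
    ext ⟨x, n⟩
    simp only [mem_inf, mem_graph_iff, range_inl, mem_prod, mem_bot, mem_ker]
    constructor <;> rintro ⟨h1, rfl⟩ <;> exact ⟨h1.symm, rfl⟩
  obtain ⟨D, hD, hess⟩ := h.essentialInSummand_inf (isDirectSummand_graph φ)
    (isDirectSummand_iff_exists_isCompl.2 ⟨_, isCompl_range_inl_inr⟩)
  rw [hGT] at hess
  have hD₁ : D ≤ ker (φ ∘ₗ fst Rᵐᵒᵖ N M) :=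
    hess.le_ker_of_isNonsingular hM _ fun x hx => (mem_prod.1 hx).1
  have hD₂ : D ≤ ker (snd Rᵐᵒᵖ N M) :=
    hess.le_ker_of_isNonsingular hM _ fun x hx => (mem_prod.1 hx).2
  have hDle : D ≤ (ker φ).prod ⊥ := fun x hx => mem_prod.2 ⟨hD₁ hx, hD₂ hx⟩
  exact (le_antisymm hDle hess.1 ▸ hD).of_prod_bot

theorem projective_range_of_isSIPCS_prod {R : Type*} [Ring R] {N M : Type*}
    [AddCommGroup N] [Module Rᵐᵒᵖ N] [Module.Projective Rᵐᵒᵖ N] [AddCommGroup M] [Module Rᵐᵒᵖ M]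
    (hM : IsNonsingular R M) (h : IsSIPCS Rᵐᵒᵖ (N × M)) (φ : N →ₗ[Rᵐᵒᵖ] M) :
    Module.Projective Rᵐᵒᵖ (range φ) :=
  have := (isDirectSummand_ker_of_isSIPCS_prod hM h φ).projective_quotient
  .of_equiv φ.quotKerEquivRange

/-- if `M` is nonsingular and `(R ⊕ M)_R` is SIP-CS, then every cyclic
submodule of `M` is projective. -/
theorem statement_18 (R : Type u) [Ring R] (M : Type u) [AddCommGroup M] [Module Rᵐᵒᵖ M]
    (hM : IsNonsingular R M) (h : IsSIPCS Rᵐᵒᵖ (R × M)) :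
    ∀ m : M, Module.Projective Rᵐᵒᵖ ↥(Submodule.span Rᵐᵒᵖ ({m} : Set M)) := by
  intro m
  have : Module.Projective Rᵐᵒᵖ R := .of_equiv (opLinearEquiv Rᵐᵒᵖ).symm
  rw [← range_opToSpanSingleton]
  exact projective_range_of_isSIPCS_prod hM h _
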